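/- arXiv:2003.11270 — 3 statements merged into one kernel-verified Lean document; each statement's English description precedes it below -/
import Mathlib

section
/- Let G₁ ⊆ G₂ be graphs on the same vertex set with ν(G₁) = ν(G₂). Then D(G₁) ⊆ D(G₂) and D(G₁) ∪ A(G₁) ⊆ D(G₂) ∪ A(G₂), where D(G) = {v : ν(G - v) = ν(G)} and A(G) = N_G(D(G)). -/
attribute [local instance] Classical.propDecidable

variable {V : Type} [Fintype V] [DecidableEq V]

/-- A matching in a simple graph `G`: a finite set of edges of `G`, pairwise vertex-disjoint. -/
def IsGMatching (G : SimpleGraph V) (M : Finset (Sym2 V)) : Prop :=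
  (∀ e ∈ M, e ∈ G.edgeSet) ∧ ∀ e ∈ M, ∀ f ∈ M, e ≠ f → ∀ v, v ∈ e → v ∉ f

/-- The matching number `ν(G)` of a simple graph. -/
noncomputable def gnu (G : SimpleGraph V) : ℕ :=
  ((Finset.univ : Finset (Sym2 V)).powerset.filter fun M => IsGMatching G M).sup Finset.card

/-- The graph `G - v`: delete the vertex `v` (i.e. all edges incident to it). -/
def delV (G : SimpleGraph V) (v : V) : SimpleGraph V where
  Adj x y := G.Adj x y ∧ x ≠ v ∧ y ≠ v
  symm := ⟨fun _ _ ⟨h, hx, hy⟩ => ⟨h.symm, hy, hx⟩⟩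
  loopless := ⟨fun x h => G.loopless.irrefl x h.1⟩

/-- The Gallai–Edmonds set `D(G) = {v : ν(G - v) = ν(G)}`. -/
def Dset (G : SimpleGraph V) : Set V := {v | gnu (delV G v) = gnu G}

/-- The Gallai–Edmonds set `A(G) = N_G(D(G))`. -/
def Aset (G : SimpleGraph V) : Set V := {w | w ∉ Dset G ∧ ∃ d ∈ Dset G, G.Adj w d}

/-- The Gallai–Edmonds set `C(G) = V \ (D(G) ∪ A(G))`. -/
def Cset (G : SimpleGraph V) : Set V := (Dset G ∪ Aset G)ᶜ

/-- Reachability inside the induced subgraph `G[S]` (same component of `G[S]`). -/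
def reachOn (G : SimpleGraph V) (S : Set V) : V → V → Prop :=
  Relation.ReflTransGen fun a b => G.Adj a b ∧ a ∈ S ∧ b ∈ S

theorem IsGMatching.mono {V : Type} {G₁ G₂ : SimpleGraph V} (hle : G₁ ≤ G₂)
    {M : Finset (Sym2 V)} (hM : IsGMatching G₁ M) : IsGMatching G₂ M :=
  ⟨fun e he => SimpleGraph.edgeSet_mono hle (hM.1 e he), hM.2⟩

theorem gnu_mono {V : Type} [Fintype V] {G₁ G₂ : SimpleGraph V} (hle : G₁ ≤ G₂) :
    gnu G₁ ≤ gnu G₂ :=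
  Finset.sup_mono (Finset.monotone_filter_right _ fun _ _ => IsGMatching.mono hle)

theorem delV_le {V : Type} (G : SimpleGraph V) (v : V) : delV G v ≤ G :=
  fun _ _ h => h.1

theorem delV_mono {V : Type} {G₁ G₂ : SimpleGraph V} (hle : G₁ ≤ G₂) (v : V) :
    delV G₁ v ≤ delV G₂ v :=
  fun _ _ h => ⟨hle h.1, h.2⟩

theorem Dset_subset_of_le_of_gnu_eq {V : Type} [Fintype V] {G₁ G₂ : SimpleGraph V}
    (hle : G₁ ≤ G₂) (hnu : gnu G₁ = gnu G₂) : Dset G₁ ⊆ Dset G₂ := by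
  intro v (hv : gnu (delV G₁ v) = gnu G₁)
  refine le_antisymm (gnu_mono (delV_le G₂ v)) ?_
  calc gnu G₂ = gnu (delV G₁ v) := by rw [hv, hnu]
    _ ≤ gnu (delV G₂ v) := gnu_mono (delV_mono hle v)

theorem Dset_union_Aset_subset_of_le {V : Type} [Fintype V] {G₁ G₂ : SimpleGraph V}
    (hle : G₁ ≤ G₂) (hD : Dset G₁ ⊆ Dset G₂) :
    Dset G₁ ∪ Aset G₁ ⊆ Dset G₂ ∪ Aset G₂ := by
  rintro v (hv | ⟨-, d, hd, hadj⟩)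
  · exact Or.inl (hD hv)
  · by_cases hv₂ : v ∈ Dset G₂
    · exact Or.inl hv₂
    · exact Or.inr ⟨hv₂, d, hD hd, hle hadj⟩

theorem Dset_mono_of_nu_eq_general {V : Type} [Fintype V]
    (G₁ G₂ : SimpleGraph V) (hle : G₁ ≤ G₂) (hnu : gnu G₁ = gnu G₂) :
    Dset G₁ ⊆ Dset G₂ ∧ Dset G₁ ∪ Aset G₁ ⊆ Dset G₂ ∪ Aset G₂ :=
  have hD := Dset_subset_of_le_of_gnu_eq hle hnu
  ⟨hD, Dset_union_Aset_subset_of_le hle hD⟩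

/-- If `G₁ ⊆ G₂` have the same vertex set and the same matching number, then
`D(G₁) ⊆ D(G₂)` and `D(G₁) ∪ A(G₁) ⊆ D(G₂) ∪ A(G₂)`. -/
theorem Dset_mono_of_nu_eq {V : Type} [Fintype V] [DecidableEq V]
    (G₁ G₂ : SimpleGraph V) (hle : G₁ ≤ G₂) (hnu : gnu G₁ = gnu G₂) :
    Dset G₁ ⊆ Dset G₂ ∧ Dset G₁ ∪ Aset G₁ ⊆ Dset G₂ ∪ Aset G₂ :=
  Dset_mono_of_nu_eq_general G₁ G₂ hle hnu
end

section
/- Let G be a graph with Gallai–Edmonds decomposition (D₁, …, D_r; A; C), where D₁, …, D_r are the connected components of the induced subgraph on D(G). Then Σ_{i=1}^r (|D_i| - 1) + 2|A| + |C| = 2ν(G); equivalently, r = |A| + |V| - 2ν(G). -/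
/-!
Induction on `|A(G)|`. If `A(G) = ∅`, no edge leaves `D(G)`. By Gallai's lemma a maximum matching
leaves at most one vertex exposed in each component of `G[D]`. It leaves at least one: a maximum
matching missing a vertex `x` of the component covers the rest of it, so the component is odd.
Hence `r = |V| - 2ν(G)`.

If `a ∈ A(G)`, then `ν(G - a) = ν(G) - 1`, `D(G - a) = D(G) ∪ {a}` (here `G - a` keeps `a` as an
isolated vertex, so `G[D]` gains one component) and `A(G - a) = A(G) \ {a}`, which reduces the
claim to `G - a`. The hard part is `D(G - a) ⊆ D(G) ∪ {a}`. If `v ∈ D(G - a) \ D(G)`, take a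
maximum matching `M` of `G - a` missing `v` and a maximum matching `N` of `G` missing a neighbour
`d ∈ D(G)` of `a`. Exchanging `M` and `N` on the component of `a` in `M ∆ N` yields matchings whose
sizes and exposed vertices force this component to contain `a`, `v` and `d`. Each of them is
covered by exactly one of `M`, `N`, so they would be three ends of a connected graph of maximum
degree two.
-/

attribute [local instance] Classical.propDecidable

variable {V : Type} [Fintype V] [DecidableEq V]

open Finset

section Matching

omit [Fintype V] [DecidableEq V]

variable {G : SimpleGraph V} {M N : Finset (Sym2 V)}

lemma SimpleGraph.adj_of_mem_edgeSet {e : Sym2 V} (he : e ∈ G.edgeSet) {x y : V} (hx : x ∈ e)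
    (hy : y ∈ e) (hxy : x ≠ y) : G.Adj x y := by
  rwa [(Sym2.mem_and_mem_iff hxy).1 ⟨hx, hy⟩] at he

lemma isGMatching_empty (G : SimpleGraph V) : IsGMatching G ∅ := by
  constructor <;> simp

lemma IsGMatching.subset (hM : IsGMatching G M) (h : N ⊆ M) : IsGMatching G N :=
  ⟨fun e he => hM.1 e (h he), fun e he f hf => hM.2 e (h he) f (h hf)⟩

lemma IsGMatching.eq_of_mem_of_mem (hM : IsGMatching G M) {e f : Sym2 V} (he : e ∈ M)
    (hf : f ∈ M) {z : V} (hze : z ∈ e) (hzf : z ∈ f) : e = f := by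
  by_contra hef
  exact hM.2 e he f hf hef z hze hzf

lemma delV_adj {v x y : V} : (delV G v).Adj x y ↔ G.Adj x y ∧ x ≠ v ∧ y ≠ v := Iff.rfl

lemma delV_comm (a b : V) : delV (delV G a) b = delV (delV G b) a := by
  ext x y; simp only [delV_adj]; tauto

lemma delV_delV_self (a : V) : delV (delV G a) a = delV G a := by
  ext x y; simp only [delV_adj]; tauto

lemma mem_edgeSet_delV {v : V} {e : Sym2 V} : e ∈ (delV G v).edgeSet ↔ e ∈ G.edgeSet ∧ v ∉ e := by
  induction e with
  | h x y =>
    simp only [SimpleGraph.mem_edgeSet, delV_adj, Sym2.mem_iff, not_or]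
    exact ⟨fun ⟨h, hx, hy⟩ => ⟨h, hx.symm, hy.symm⟩, fun ⟨h, hx, hy⟩ => ⟨h, Ne.symm hx, Ne.symm hy⟩⟩

lemma induce_delV_of_notMem {a : V} {S : Set V} (ha : a ∉ S) :
    (delV G a).induce S = G.induce S := by
  ext x y
  simp only [SimpleGraph.comap_adj, Function.Embedding.subtype_apply, delV_adj]
  exact ⟨fun h => h.1, fun h => ⟨h, fun hx => ha (hx ▸ x.2), fun hy => ha (hy ▸ y.2)⟩⟩

end Matching

section CoveredVerts

omit [Fintype V]

def coveredVerts (M : Finset (Sym2 V)) : Finset V := M.biUnion Sym2.toFinset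

variable {G : SimpleGraph V} {M N : Finset (Sym2 V)}

lemma mem_coveredVerts {z : V} : z ∈ coveredVerts M ↔ ∃ e ∈ M, z ∈ e := by
  simp [coveredVerts, Sym2.mem_toFinset]

lemma coveredVerts_mono (h : M ⊆ N) : coveredVerts M ⊆ coveredVerts N :=
  biUnion_subset_biUnion_of_subset_left _ h

lemma mem_coveredVerts_insert {e : Sym2 V} {z : V} :
    z ∈ coveredVerts (insert e M) ↔ z ∈ e ∨ z ∈ coveredVerts M := by
  simp [coveredVerts, Sym2.mem_toFinset]

lemma card_insert_of_notMem_coveredVerts {x : V} (hx : x ∉ coveredVerts M) (y : V) :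
    #(insert s(x, y) M) = #M + 1 :=
  card_insert_of_notMem fun h => hx (mem_coveredVerts.2 ⟨_, h, Sym2.mem_mk_left x y⟩)

lemma isGMatching_delV_iff {v : V} :
    IsGMatching (delV G v) M ↔ IsGMatching G M ∧ v ∉ coveredVerts M := by
  simp only [IsGMatching, mem_edgeSet_delV, mem_coveredVerts, not_exists, not_and]
  exact ⟨fun h => ⟨⟨fun e he => (h.1 e he).1, h.2⟩, fun e he => (h.1 e he).2⟩,
    fun h => ⟨fun e he => ⟨h.1.1 e he, h.2 e he⟩, h.1.2⟩⟩

namespace IsGMatching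

lemma card_filter_mem_le_one (hM : IsGMatching G M) (z : V) : #(M.filter (z ∈ ·)) ≤ 1 :=
  card_le_one.2 fun _ he _ hf =>
    hM.eq_of_mem_of_mem (mem_filter.1 he).1 (mem_filter.1 hf).1 (mem_filter.1 he).2
      (mem_filter.1 hf).2

lemma card_coveredVerts (hM : IsGMatching G M) : #(coveredVerts M) = 2 * #M := by
  rw [coveredVerts, card_biUnion, sum_congr rfl fun e he =>
    Sym2.card_toFinset_of_not_isDiag e (G.not_isDiag_of_mem_edgeSet (hM.1 e he)), sum_const,
    smul_eq_mul, mul_comm]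
  intro e he f hf hef
  exact disjoint_left.2 fun z hze hzf =>
    hM.2 e he f hf hef z (Sym2.mem_toFinset.1 hze) (Sym2.mem_toFinset.1 hzf)

lemma insert_edge (hM : IsGMatching G M) {x y : V} (hxy : G.Adj x y) (hx : x ∉ coveredVerts M)
    (hy : y ∉ coveredVerts M) : IsGMatching G (insert s(x, y) M) := by
  have hfree : ∀ f ∈ M, ∀ z ∈ s(x, y), z ∉ f := by
    intro f hf z hz hzf
    rcases Sym2.mem_iff.1 hz with rfl | rfl
    exacts [hx (mem_coveredVerts.2 ⟨f, hf, hzf⟩), hy (mem_coveredVerts.2 ⟨f, hf, hzf⟩)]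
  refine ⟨fun e he => ?_, fun e he f hf hef z hze hzf => ?_⟩
  · rcases mem_insert.1 he with rfl | he
    exacts [hxy, hM.1 e he]
  · rcases mem_insert.1 he with rfl | he <;> rcases mem_insert.1 hf with rfl | hf
    exacts [hef rfl, hfree f hf z hze hzf, hfree e he z hzf hze, hM.2 e he f hf hef z hze hzf]

lemma even_card_coveredVerts_inter (hM : IsGMatching G M) {S : Finset V}
    (hS : ∀ x ∈ S, ∀ y, G.Adj x y → y ∈ S) : Even #(coveredVerts M ∩ S) := by
  have hcov : coveredVerts (M.filter fun e => ∃ w ∈ e, w ∈ S) = coveredVerts M ∩ S := by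
    ext z
    simp only [mem_inter, mem_coveredVerts, mem_filter]
    constructor
    · rintro ⟨e, ⟨heM, w, hwe, hwS⟩, hze⟩
      refine ⟨⟨e, heM, hze⟩, ?_⟩
      by_cases hwz : w = z
      · exact hwz ▸ hwS
      · exact hS w hwS z (SimpleGraph.adj_of_mem_edgeSet (hM.1 e heM) hwe hze hwz)
    · rintro ⟨⟨e, heM, hze⟩, hzS⟩
      exact ⟨e, ⟨heM, z, hze, hzS⟩, hze⟩
  rw [← hcov, (hM.subset (filter_subset _ _)).card_coveredVerts]
  exact even_two_mul _

end IsGMatching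

end CoveredVerts

def IsMaxGMatching (G : SimpleGraph V) (M : Finset (Sym2 V)) : Prop :=
  IsGMatching G M ∧ M.card = gnu G

section MaxMatchings

variable {G : SimpleGraph V} {M : Finset (Sym2 V)}

omit [DecidableEq V] in
lemma IsGMatching.card_le_gnu (hM : IsGMatching G M) : M.card ≤ gnu G :=
  le_sup (f := card) (mem_filter.2 ⟨mem_powerset.2 (subset_univ M), hM⟩)

omit [DecidableEq V] in
lemma exists_isMaxGMatching (G : SimpleGraph V) : ∃ M, IsMaxGMatching G M := by
  obtain ⟨M, hM, hcard⟩ := exists_mem_eq_sup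
    ((univ : Finset (Sym2 V)).powerset.filter fun M => IsGMatching G M)
    ⟨∅, mem_filter.2 ⟨empty_mem_powerset _, isGMatching_empty G⟩⟩ card
  exact ⟨M, (mem_filter.1 hM).2, hcard.symm⟩

lemma IsMaxGMatching.not_adj (hM : IsMaxGMatching G M) {x y : V} (hx : x ∉ coveredVerts M)
    (hy : y ∉ coveredVerts M) : ¬ G.Adj x y := fun hxy => by
  have := (hM.1.insert_edge hxy hx hy).card_le_gnu
  rw [card_insert_of_notMem_coveredVerts hx, hM.2] at this
  omega

lemma IsGMatching.isMaxGMatching_insert_edge (hM : IsGMatching G M) (hcard : #M + 1 = gnu G)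
    {x y : V} (hxy : G.Adj x y) (hx : x ∉ coveredVerts M) (hy : y ∉ coveredVerts M) :
    IsMaxGMatching G (insert s(x, y) M) :=
  ⟨hM.insert_edge hxy hx hy, by rw [card_insert_of_notMem_coveredVerts hx, hcard]⟩

lemma gnu_delV_le (v : V) : gnu (delV G v) ≤ gnu G := by
  obtain ⟨M, hM, hcard⟩ := exists_isMaxGMatching (delV G v)
  exact hcard ▸ (isGMatching_delV_iff.1 hM).1.card_le_gnu

lemma gnu_le_gnu_delV_add_one (v : V) : gnu G ≤ gnu (delV G v) + 1 := by
  obtain ⟨M, hM, hcard⟩ := exists_isMaxGMatching G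
  have hM' : IsGMatching (delV G v) (M.filter (v ∉ ·)) := by
    refine isGMatching_delV_iff.2 ⟨hM.subset (filter_subset _ _), fun hv => ?_⟩
    obtain ⟨e, he, hve⟩ := mem_coveredVerts.1 hv
    exact (mem_filter.1 he).2 hve
  have hsplit := card_filter_add_card_filter_not (s := M) (v ∈ ·)
  have := hM.card_filter_mem_le_one v
  have := hM'.card_le_gnu
  omega

lemma gnu_delV_add_one_of_notMem_Dset {a : V} (ha : a ∉ Dset G) : gnu (delV G a) + 1 = gnu G := by
  have := gnu_delV_le (G := G) a
  have := gnu_le_gnu_delV_add_one (G := G) a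
  have : gnu (delV G a) ≠ gnu G := ha
  omega

lemma mem_Dset_iff {v : V} : v ∈ Dset G ↔ ∃ M, IsMaxGMatching G M ∧ v ∉ coveredVerts M := by
  refine ⟨fun hv => ?_, fun ⟨M, hM, hv⟩ => le_antisymm (gnu_delV_le v) ?_⟩
  · obtain ⟨M, hM, hcard⟩ := exists_isMaxGMatching (delV G v)
    obtain ⟨hMG, hvM⟩ := isGMatching_delV_iff.1 hM
    exact ⟨M, ⟨hMG, hcard.trans hv⟩, hvM⟩
  · exact hM.2 ▸ (isGMatching_delV_iff.2 ⟨hM.1, hv⟩).card_le_gnu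

lemma IsMaxGMatching.mem_Dset_of_notMem_coveredVerts (hM : IsMaxGMatching G M) {v : V}
    (hv : v ∉ coveredVerts M) : v ∈ Dset G :=
  mem_Dset_iff.2 ⟨M, hM, hv⟩

lemma IsMaxGMatching.mem_coveredVerts_of_notMem_Dset (hM : IsMaxGMatching G M) {v : V}
    (hv : v ∉ Dset G) : v ∈ coveredVerts M :=
  not_imp_comm.1 hM.mem_Dset_of_notMem_coveredVerts hv

end MaxMatchings

section Gallai

variable {G : SimpleGraph V}

lemma IsMaxGMatching.exists_card_inter_lt {N K : Finset (Sym2 V)} (hN : IsMaxGMatching G N)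
    (hK : IsMaxGMatching G K) {z : V} (hzN : z ∈ coveredVerts N) (hzK : z ∉ coveredVerts K) :
    ∃ K', IsMaxGMatching G K' ∧ #(K ∩ N) < #(K' ∩ N) ∧
      ∀ u ∉ coveredVerts K, u ≠ z → u ∉ coveredVerts K' := by
  obtain ⟨e, heN, hze⟩ := mem_coveredVerts.1 hzN
  set z' := Sym2.Mem.other hze
  have he : s(z, z') = e := Sym2.other_spec hze
  have hadj : G.Adj z z' := by rw [← SimpleGraph.mem_edgeSet, he]; exact hN.1.1 e heN
  have hz'K : z' ∈ coveredVerts K := by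
    by_contra h
    exact hK.not_adj hzK h hadj
  obtain ⟨f, hfK, hz'f⟩ := mem_coveredVerts.1 hz'K
  have heK : e ∉ K := fun h => hzK (mem_coveredVerts.2 ⟨e, h, hze⟩)
  have hfN : f ∉ N := fun h =>
    heK (hN.1.eq_of_mem_of_mem h heN hz'f (he ▸ Sym2.mem_mk_right z z') ▸ hfK)
  have hK₀ : IsGMatching G (K.erase f) := hK.1.subset (erase_subset _ _)
  have hzK₀ : z ∉ coveredVerts (K.erase f) := fun h => hzK (coveredVerts_mono (erase_subset _ _) h)
  have hz'K₀ : z' ∉ coveredVerts (K.erase f) := by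
    intro h
    obtain ⟨g, hg, hz'g⟩ := mem_coveredVerts.1 h
    exact ne_of_mem_erase hg (hK.1.eq_of_mem_of_mem (mem_of_mem_erase hg) hfK hz'g hz'f)
  refine ⟨insert s(z, z') (K.erase f), ⟨hK₀.insert_edge hadj hzK₀ hz'K₀, ?_⟩, ?_, ?_⟩
  · rw [card_insert_of_notMem_coveredVerts hzK₀, card_erase_of_mem hfK, ← hK.2]
    have := card_pos.2 ⟨f, hfK⟩
    omega
  · refine card_lt_card ((ssubset_iff_of_subset fun g hg => ?_).2
      ⟨e, ?_, fun h => heK (mem_inter.1 h).1⟩)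
    · obtain ⟨hgK, hgN⟩ := mem_inter.1 hg
      exact mem_inter.2 ⟨mem_insert_of_mem (mem_erase.2 ⟨fun h => hfN (h ▸ hgN), hgK⟩), hgN⟩
    · exact mem_inter.2 ⟨he ▸ mem_insert_self _ _, heN⟩
  · intro u hu huz hu'
    obtain ⟨g, hg, hug⟩ := mem_coveredVerts.1 hu'
    rcases mem_insert.1 hg with rfl | hg
    · rcases Sym2.mem_iff.1 hug with rfl | rfl
      exacts [huz rfl, hu hz'K]
    · exact hu (coveredVerts_mono (erase_subset _ _) (mem_coveredVerts.2 ⟨g, hg, hug⟩))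

lemma IsMaxGMatching.exists_erase_subset_coveredVerts {N : Finset (Sym2 V)}
    (hN : IsMaxGMatching G N) {w : V} (hw : w ∈ Dset G) :
    ∃ K, IsMaxGMatching G K ∧ w ∉ coveredVerts K ∧ (coveredVerts N).erase w ⊆ coveredVerts K := by
  obtain ⟨K, hKT, hmax⟩ := exists_max_image
    ((univ : Finset (Sym2 V)).powerset.filter fun K => IsMaxGMatching G K ∧ w ∉ coveredVerts K)
    (fun K => #(K ∩ N))
    (by
      obtain ⟨K, hK⟩ := mem_Dset_iff.1 hw
      exact ⟨K, mem_filter.2 ⟨mem_powerset.2 (subset_univ K), hK⟩⟩)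
  obtain ⟨hK, hwK⟩ := (mem_filter.1 hKT).2
  refine ⟨K, hK, hwK, fun z hz => ?_⟩
  by_contra hzK
  obtain ⟨hzw, hzN⟩ := mem_erase.1 hz
  obtain ⟨K', hK', hlt, hexp⟩ := hN.exists_card_inter_lt hK hzN hzK
  have := hmax K' (mem_filter.2 ⟨mem_powerset.2 (subset_univ K'), hK', hexp w hwK (Ne.symm hzw)⟩)
  omega

lemma IsMaxGMatching.eq_of_reachable {M : Finset (Sym2 V)} (hM : IsMaxGMatching G M)
    {x y : Dset G} (hxy : (G.induce (Dset G)).Reachable x y) (hx : ↑x ∉ coveredVerts M)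
    (hy : ↑y ∉ coveredVerts M) : x = y := by
  obtain ⟨p⟩ := hxy
  induction p generalizing M with
  | nil => rfl
  | @cons x w y hxw q ih =>
    by_contra hne
    have hwM : ↑w ∈ coveredVerts M := by
      by_contra hwM
      exact hM.not_adj hx hwM hxw
    obtain ⟨K, hK, hwK, hcov⟩ := hM.exists_erase_subset_coveredVerts w.2
    by_cases hxK : ↑x ∈ coveredVerts K
    · by_cases hyK : ↑y ∈ coveredVerts K
      · -- `K` covers all `M`-covered vertices but `w`, so it has no room for both `x` and `y`
        have := card_le_card (insert_subset hxK (insert_subset hyK hcov))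
        rw [card_insert_of_notMem, card_insert_of_notMem, card_erase_of_mem hwM,
          hK.1.card_coveredVerts, hM.1.card_coveredVerts, hK.2, hM.2] at this
        · omega
        · exact fun h => hy (mem_of_mem_erase h)
        · simp only [mem_insert, not_or]
          exact ⟨fun h => hne (Subtype.ext h), fun h => hx (mem_of_mem_erase h)⟩
      · exact hy (ih hK hwK hyK ▸ hwM)
    · exact hK.not_adj hxK hwK hxw

omit [DecidableEq V] in
lemma mem_Dset_of_adj_of_Aset_eq_empty (hA : Aset G = ∅) {x y : V} (hx : x ∈ Dset G)
    (hxy : G.Adj x y) : y ∈ Dset G := by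
  by_contra hy
  exact (Set.eq_empty_iff_forall_notMem.1 hA) y ⟨hy, x, hx, hxy.symm⟩

lemma IsMaxGMatching.exists_mem_supp_notMem_coveredVerts {M : Finset (Sym2 V)}
    (hM : IsMaxGMatching G M) (hA : Aset G = ∅) (c : (G.induce (Dset G)).ConnectedComponent) :
    ∃ z ∈ c.supp, ↑z ∉ coveredVerts M := by
  set K : Finset V := univ.filter fun z => ∃ h : z ∈ Dset G, ⟨z, h⟩ ∈ c.supp
  have hK : ∀ x ∈ K, ∀ y, G.Adj x y → y ∈ K := by
    intro x hx y hxy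
    obtain ⟨hxD, hxc⟩ := (mem_filter.1 hx).2
    have hyD := mem_Dset_of_adj_of_Aset_eq_empty hA hxD hxy
    refine mem_filter.2 ⟨mem_univ y, hyD, ?_⟩
    rw [SimpleGraph.ConnectedComponent.mem_supp_iff] at hxc ⊢
    rw [← hxc]
    exact SimpleGraph.ConnectedComponent.connectedComponentMk_eq_of_adj (G := G.induce (Dset G))
      (by exact hxy.symm)
  obtain ⟨x, hxc⟩ := c.nonempty_supp
  have hxK : ↑x ∈ K := mem_filter.2 ⟨mem_univ _, x.2, hxc⟩
  obtain ⟨N, hN, hxN⟩ := mem_Dset_iff.1 x.2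
  -- by Gallai's lemma `N` covers `K` except `x`, so `#K` is odd and `M` cannot cover all of `K`
  have hNK : coveredVerts N ∩ K = K.erase x := by
    ext z
    simp only [mem_inter, mem_erase]
    refine ⟨fun ⟨hzN, hzK⟩ => ⟨fun h => hxN (h ▸ hzN), hzK⟩, fun ⟨hzx, hzK⟩ => ⟨?_, hzK⟩⟩
    by_contra hzN
    obtain ⟨hzD, hzc⟩ := (mem_filter.1 hzK).2
    have hreach := SimpleGraph.ConnectedComponent.exact
      (((c.mem_supp_iff _).1 hzc).trans ((c.mem_supp_iff _).1 hxc).symm)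
    exact hzx (congrArg Subtype.val (hN.eq_of_reachable hreach hzN hxN))
  by_contra! hall
  have hMK : coveredVerts M ∩ K = K := by
    refine inter_eq_right.2 fun z hz => ?_
    obtain ⟨hzD, hzc⟩ := (mem_filter.1 hz).2
    exact hall ⟨z, hzD⟩ hzc
  have hodd := hN.1.even_card_coveredVerts_inter hK
  have heven := hM.1.even_card_coveredVerts_inter hK
  rw [hNK, card_erase_of_mem hxK] at hodd
  rw [hMK] at heven
  exact Nat.not_even_one ((Nat.even_sub (card_pos.2 ⟨_, hxK⟩)).1 hodd |>.1 heven)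

lemma card_connectedComponent_Dset_of_Aset_eq_empty (hA : Aset G = ∅) :
    Nat.card (G.induce (Dset G)).ConnectedComponent + 2 * gnu G = Fintype.card V := by
  obtain ⟨M, hM⟩ := exists_isMaxGMatching G
  set E := univ.filter fun z => z ∉ coveredVerts M
  let ψ : E → (G.induce (Dset G)).ConnectedComponent := fun z =>
    (G.induce (Dset G)).connectedComponentMk
      ⟨z, hM.mem_Dset_of_notMem_coveredVerts (mem_filter.1 z.2).2⟩
  have hψ : Function.Bijective ψ := by
    refine ⟨fun z z' h => ?_, fun c => ?_⟩
    · have := hM.eq_of_reachable (SimpleGraph.ConnectedComponent.exact h)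
        (mem_filter.1 z.2).2 (mem_filter.1 z'.2).2
      exact Subtype.ext (congrArg (fun w : Dset G => (w : V)) this)
    · obtain ⟨z, hzc, hzM⟩ := hM.exists_mem_supp_notMem_coveredVerts hA c
      exact ⟨⟨z, mem_filter.2 ⟨mem_univ _, hzM⟩⟩, (c.mem_supp_iff z).1 hzc⟩
  rw [← Nat.card_eq_of_bijective ψ hψ, Nat.card_eq_finsetCard, ← hM.2, ← hM.1.card_coveredVerts,
    ← card_univ, ← card_filter_add_card_filter_not (s := univ) (· ∈ coveredVerts M), add_comm]
  simp [E]

end Gallai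

lemma SimpleGraph.Connected.card_degree_eq_one_le_two {W : Type*} [Fintype W]
    {K : SimpleGraph W} [DecidableRel K.Adj] (hK : K.Connected) (hdeg : ∀ w, K.degree w ≤ 2) :
    #(univ.filter fun w => K.degree w = 1) ≤ 2 := by
  -- `∑ deg = 2 |E| ≥ 2 |V| - 2`, while each vertex contributes at most `2`, and an end only `1`
  have hedges := hK.card_vert_le_card_edgeSet_add_one
  rw [Nat.card_eq_fintype_card, Nat.card_eq_fintype_card, ← SimpleGraph.edgeFinset_card] at hedges
  have hsum : ∑ w, (K.degree w + if K.degree w = 1 then 1 else 0) ≤ ∑ _w : W, 2 :=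
    sum_le_sum fun w _ => by have := hdeg w; split_ifs <;> omega
  rw [sum_add_distrib, K.sum_degrees_eq_twice_card_edges, ← card_filter, sum_const, card_univ,
    smul_eq_mul] at hsum
  omega

lemma SimpleGraph.ConnectedComponent.card_degree_eq_one_le_two {W : Type*} [Fintype W]
    [DecidableEq W] {H : SimpleGraph W} [DecidableRel H.Adj] (c : H.ConnectedComponent)
    (hdeg : ∀ w ∈ c.supp, H.degree w ≤ 2) :
    #(univ.filter fun w => w ∈ c.supp ∧ H.degree w = 1) ≤ 2 := by
  have hdeg' : ∀ w : c.supp, (H.induce c.supp).degree w = H.degree w := fun w =>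
    SimpleGraph.degree_induce_of_neighborSet_subset fun _ hu => c.mem_supp_of_adj_mem_supp w.2 hu
  calc #(univ.filter fun w => w ∈ c.supp ∧ H.degree w = 1)
      = #((univ.filter fun w : c.supp => (H.induce c.supp).degree w = 1).map
          (Function.Embedding.subtype _)) := by
        congr 1
        ext w
        simp only [mem_filter, mem_univ, true_and, mem_map, Function.Embedding.subtype_apply, hdeg']
        exact ⟨fun ⟨hw, h1⟩ => ⟨⟨w, hw⟩, h1, rfl⟩, fun ⟨u, h1, hu⟩ => hu ▸ ⟨u.2, h1⟩⟩
    _ ≤ 2 := by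
        rw [card_map]
        exact c.maximal_connected_induce_supp.1.card_degree_eq_one_le_two fun w =>
          hdeg' w ▸ hdeg w w.2

section Switch

variable {G : SimpleGraph V} {M N : Finset (Sym2 V)} {S : Set V}

noncomputable def switch (M N : Finset (Sym2 V)) (S : Set V) : Finset (Sym2 V) :=
  M.filter (fun e => ¬ ∃ z ∈ e, z ∈ S) ∪ N.filter (fun e => ∃ z ∈ e, z ∈ S)

def SwitchClosed (M N : Finset (Sym2 V)) (S : Set V) : Prop :=
  ∀ e ∈ symmDiff M N, ∀ x ∈ e, ∀ y ∈ e, x ∈ S → y ∈ S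

lemma SwitchClosed.symm (hS : SwitchClosed M N S) : SwitchClosed N M S := by
  rwa [SwitchClosed, symmDiff_comm]

lemma card_switch_add_card_switch : #(switch M N S) + #(switch N M S) = #M + #N := by
  rw [switch, switch, card_union_of_disjoint (disjoint_filter_filter_not _ _ _).symm,
    card_union_of_disjoint (disjoint_filter_filter_not _ _ _).symm,
    ← card_filter_add_card_filter_not (s := M) (fun e => ∃ z ∈ e, z ∈ S),
    ← card_filter_add_card_filter_not (s := N) (fun e => ∃ z ∈ e, z ∈ S)]
  ring

lemma isGMatching_switch (hM : IsGMatching G M) (hN : IsGMatching G N) (hS : SwitchClosed M N S) :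
    IsGMatching G (switch M N S) := by
  have hmixed : ∀ e ∈ M, (¬ ∃ z ∈ e, z ∈ S) → ∀ f ∈ N, (∃ z ∈ f, z ∈ S) →
      ∀ z ∈ e, z ∉ f := by
    rintro e heM heS f hfN ⟨w, hwf, hwS⟩ z hze hzf
    by_cases hfM : f ∈ M
    · exact heS ⟨w, hM.eq_of_mem_of_mem hfM heM hzf hze ▸ hwf, hwS⟩
    · exact heS ⟨z, hze, hS f (mem_symmDiff.2 (Or.inr ⟨hfN, hfM⟩)) w hwf z hzf hwS⟩
  refine ⟨fun e he => ?_, fun e he f hf hef z hze hzf => ?_⟩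
  · rcases mem_union.1 he with he | he
    exacts [hM.1 e (mem_filter.1 he).1, hN.1 e (mem_filter.1 he).1]
  rcases mem_union.1 he with he | he <;> rcases mem_union.1 hf with hf | hf <;>
    simp only [mem_filter] at he hf
  · exact hM.2 e he.1 f hf.1 hef z hze hzf
  · exact hmixed e he.1 he.2 f hf.1 hf.2 z hze hzf
  · exact hmixed f hf.1 hf.2 e he.1 he.2 z hzf hze
  · exact hN.2 e he.1 f hf.1 hef z hze hzf

lemma mem_coveredVerts_switch_of_mem {z : V} (hz : z ∈ S) :
    z ∈ coveredVerts (switch M N S) ↔ z ∈ coveredVerts N := by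
  simp only [mem_coveredVerts, switch, mem_union, mem_filter]
  constructor
  · rintro ⟨e, (⟨_, he⟩ | ⟨he, _⟩), hze⟩
    exacts [(he ⟨z, hze, hz⟩).elim, ⟨e, he, hze⟩]
  · rintro ⟨e, he, hze⟩
    exact ⟨e, Or.inr ⟨he, z, hze, hz⟩, hze⟩

lemma SwitchClosed.mem_coveredVerts_switch_of_notMem (hS : SwitchClosed M N S) {z : V}
    (hz : z ∉ S) : z ∈ coveredVerts (switch M N S) ↔ z ∈ coveredVerts M := by
  simp only [mem_coveredVerts, switch, mem_union, mem_filter]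
  constructor
  · rintro ⟨e, (⟨he, _⟩ | ⟨he, w, hwe, hwS⟩), hze⟩
    · exact ⟨e, he, hze⟩
    · by_cases heM : e ∈ M
      · exact ⟨e, heM, hze⟩
      · exact (hz (hS e (mem_symmDiff.2 (Or.inr ⟨he, heM⟩)) w hwe z hze hwS)).elim
  · rintro ⟨e, he, hze⟩
    by_cases heS : ∃ w ∈ e, w ∈ S
    · by_cases heN : e ∈ N
      · exact ⟨e, Or.inr ⟨heN, heS⟩, hze⟩
      · obtain ⟨w, hwe, hwS⟩ := heS
        exact (hz (hS e (mem_symmDiff.2 (Or.inl ⟨he, heN⟩)) w hwe z hze hwS)).elim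
    · exact ⟨e, Or.inl ⟨he, heS⟩, hze⟩

def symmDiffGraph (M N : Finset (Sym2 V)) : SimpleGraph V :=
  SimpleGraph.fromEdgeSet ↑(symmDiff M N)

omit [Fintype V] in
lemma switchClosed_supp (c : (symmDiffGraph M N).ConnectedComponent) :
    SwitchClosed M N c.supp := by
  intro e he x hxe y hye hx
  by_cases hxy : x = y
  · exact hxy ▸ hx
  refine c.mem_supp_of_adj_mem_supp hx ((SimpleGraph.fromEdgeSet_adj _).2 ⟨?_, hxy⟩)
  rw [← (Sym2.mem_and_mem_iff hxy).1 ⟨hxe, hye⟩]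
  exact mem_coe.2 he

lemma degree_symmDiffGraph (hM : IsGMatching G M) (hN : IsGMatching G N) (z : V) :
    (symmDiffGraph M N).degree z = #((symmDiff M N).filter (z ∈ ·)) := by
  rw [← SimpleGraph.card_incidenceFinset_eq_degree, SimpleGraph.incidenceFinset_eq_filter]
  congr 1
  ext e
  rw [mem_filter, mem_filter, SimpleGraph.mem_edgeFinset]
  simp only [symmDiffGraph, SimpleGraph.edgeSet_fromEdgeSet, Set.mem_sdiff, mem_coe,
    Sym2.mem_diagSet]
  refine ⟨fun ⟨⟨he, _⟩, hz⟩ => ⟨he, hz⟩, fun ⟨he, hz⟩ => ⟨⟨he, ?_⟩, hz⟩⟩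
  rcases mem_symmDiff.1 he with ⟨he, _⟩ | ⟨he, _⟩
  exacts [G.not_isDiag_of_mem_edgeSet (hM.1 e he), G.not_isDiag_of_mem_edgeSet (hN.1 e he)]

lemma degree_symmDiffGraph_le_two (hM : IsGMatching G M) (hN : IsGMatching G N) (z : V) :
    (symmDiffGraph M N).degree z ≤ 2 := by
  rw [degree_symmDiffGraph hM hN]
  calc #((symmDiff M N).filter (z ∈ ·))
      ≤ #(M.filter (z ∈ ·) ∪ N.filter (z ∈ ·)) := card_le_card fun e he => by
        simp only [mem_filter, mem_union, mem_symmDiff] at he ⊢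
        tauto
    _ ≤ 2 := (card_union_le _ _).trans (add_le_add (hM.card_filter_mem_le_one z)
        (hN.card_filter_mem_le_one z))

lemma degree_symmDiffGraph_eq_one (hM : IsGMatching G M) (hN : IsGMatching G N) {z : V}
    (hz : Xor (z ∈ coveredVerts M) (z ∈ coveredVerts N)) : (symmDiffGraph M N).degree z = 1 := by
  wlog hzM : z ∉ coveredVerts M generalizing M N
  · rw [symmDiffGraph, symmDiff_comm]
    exact this hN hM (xor_comm _ _ ▸ hz) (hz.elim And.right fun h => (hzM h.2).elim)
  have hzN : z ∈ coveredVerts N := hz.elim (fun h => (hzM h.1).elim) And.left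
  have hfilter : (symmDiff M N).filter (z ∈ ·) = N.filter (z ∈ ·) := by
    ext e
    simp only [mem_filter, mem_symmDiff]
    refine ⟨fun ⟨h, hze⟩ => ⟨?_, hze⟩, fun ⟨he, hze⟩ => ⟨Or.inr ⟨he, fun h => ?_⟩, hze⟩⟩
    · exact h.elim (fun h => (hzM (mem_coveredVerts.2 ⟨e, h.1, hze⟩)).elim) And.left
    · exact hzM (mem_coveredVerts.2 ⟨e, h, hze⟩)
  rw [degree_symmDiffGraph hM hN, hfilter]
  obtain ⟨e, he, hze⟩ := mem_coveredVerts.1 hzN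
  exact le_antisymm (hN.card_filter_mem_le_one z) (card_pos.2 ⟨e, mem_filter.2 ⟨he, hze⟩⟩)

lemma IsGMatching.card_xor_coveredVerts_le_two (hM : IsGMatching G M) (hN : IsGMatching G N)
    (c : (symmDiffGraph M N).ConnectedComponent) :
    #(univ.filter fun z => z ∈ c.supp ∧ Xor (z ∈ coveredVerts M) (z ∈ coveredVerts N)) ≤ 2 :=
  (card_le_card fun z hz => by
    simp only [mem_filter, mem_univ, true_and] at hz ⊢
    exact ⟨hz.1, degree_symmDiffGraph_eq_one hM hN hz.2⟩).trans
    (c.card_degree_eq_one_le_two fun z _ => degree_symmDiffGraph_le_two hM hN z)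

end Switch

section Stability

variable {G : SimpleGraph V}

lemma isMaxGMatching_switch {M N : Finset (Sym2 V)} {S : Set V} (hM : IsGMatching G M)
    (hMcard : #M + 1 = gnu G) (hN : IsMaxGMatching G N) (hS : SwitchClosed M N S) {a : V}
    (haD : a ∉ Dset G) (haM : a ∉ coveredVerts M) (haS : a ∈ S) :
    IsMaxGMatching G (switch M N S) ∧ #(switch N M S) + 1 = gnu G := by
  have hP := isGMatching_switch hM hN.1 hS
  have hP' := isGMatching_switch hN.1 hM hS.symm
  have hsum := card_switch_add_card_switch (M := M) (N := N) (S := S)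
  have haP' : a ∉ coveredVerts (switch N M S) := by rwa [mem_coveredVerts_switch_of_mem haS]
  have hP'ne : #(switch N M S) ≠ gnu G := fun h =>
    haD (IsMaxGMatching.mem_Dset_of_notMem_coveredVerts ⟨hP', h⟩ haP')
  have := hP.card_le_gnu
  have := hP'.card_le_gnu
  have := hN.2
  exact ⟨⟨hP, by omega⟩, by omega⟩

lemma mem_Dset_of_mem_Dset_delV {a v : V} (ha : a ∈ Aset G) (hv : v ∈ Dset (delV G a))
    (hva : v ≠ a) : v ∈ Dset G := by
  obtain ⟨haD, d, hdD, had⟩ := ha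
  by_contra hvD
  have hvd : v ≠ d := fun h => hvD (h ▸ hdD)
  have had' : a ≠ d := fun h => haD (h ▸ hdD)
  obtain ⟨M, ⟨hMdel, hMcard⟩, hvM⟩ := mem_Dset_iff.1 hv
  obtain ⟨hM, haM⟩ := isGMatching_delV_iff.1 hMdel
  rw [← Nat.add_right_cancel_iff (n := 1), gnu_delV_add_one_of_notMem_Dset haD] at hMcard
  obtain ⟨N, hN, hdN⟩ := mem_Dset_iff.1 hdD
  have hno_room : ∀ P, IsGMatching G P → #P + 1 = gnu G → a ∉ coveredVerts P →
      v ∉ coveredVerts P → d ∈ coveredVerts P := by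
    intro P hP hPcard haP hvP
    by_contra hdP
    exact hvD ((hP.isMaxGMatching_insert_edge hPcard had haP hdP).mem_Dset_of_notMem_coveredVerts
      (by simp [mem_coveredVerts_insert, hva, hvd, hvP]))
  have hdM := hno_room M hM hMcard haM hvM
  obtain ⟨c, haS⟩ : ∃ c : (symmDiffGraph M N).ConnectedComponent, a ∈ c.supp := ⟨_, rfl⟩
  have hS : SwitchClosed M N c.supp := switchClosed_supp c
  obtain ⟨hP, hP'card⟩ := isMaxGMatching_switch hM hMcard hN hS haD haM haS
  have hvS : v ∈ c.supp := by
    by_contra hvS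
    exact hvD (hP.mem_Dset_of_notMem_coveredVerts
      (by rwa [hS.mem_coveredVerts_switch_of_notMem hvS]))
  have hdS : d ∈ c.supp := by
    by_contra hdS
    have := hno_room _ (isGMatching_switch hN.1 hM hS.symm) hP'card
      (by rwa [mem_coveredVerts_switch_of_mem haS]) (by rwa [mem_coveredVerts_switch_of_mem hvS])
    rw [hS.symm.mem_coveredVerts_switch_of_notMem hdS] at this
    exact hdN this
  -- `a`, `v` and `d` would be three ends of the component `c`
  refine (hM.card_xor_coveredVerts_le_two hN.1 c).not_gt
    (two_lt_card.2 ⟨a, ?_, v, ?_, d, ?_, hva.symm, had', hvd⟩) <;>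
    simp only [mem_filter, mem_univ, true_and]
  exacts [⟨haS, Or.inr ⟨hN.mem_coveredVerts_of_notMem_Dset haD, haM⟩⟩,
    ⟨hvS, Or.inr ⟨hN.mem_coveredVerts_of_notMem_Dset hvD, hvM⟩⟩, ⟨hdS, Or.inl ⟨hdM, hdN⟩⟩]

end Stability

lemma SimpleGraph.Walk.apply_eq_of_forall_adj {W β : Type*} {K : SimpleGraph W} {f : W → β}
    (hf : ∀ x y, K.Adj x y → f x = f y) {x y : W} (p : K.Walk x y) : f x = f y := by
  induction p with
  | nil => rfl
  | cons hxy _ ih => exact (hf _ _ hxy).trans ih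

noncomputable def SimpleGraph.induceInsertConnectedComponentEquiv {W : Type*}
    {K : SimpleGraph W} {S : Set W} {a : W} (ha : a ∉ S) (hiso : ∀ x, ¬ K.Adj a x) :
    (K.induce (insert a S)).ConnectedComponent ≃ Option (K.induce S).ConnectedComponent :=
  let f : ↥(insert a S : Set W) → Option (K.induce S).ConnectedComponent := fun x =>
    if h : ↑x ∈ S then some ((K.induce S).connectedComponentMk ⟨x, h⟩) else none
  have hf : ∀ x y, (K.induce (insert a S)).Adj x y → f x = f y := by
    intro x y hxy
    have hx : ↑x ∈ S := x.2.resolve_left fun h => hiso y (by simpa [h] using hxy)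
    have hy : ↑y ∈ S := y.2.resolve_left fun h => hiso x (by simpa [h] using hxy.symm)
    simp only [f, dif_pos hx, dif_pos hy]
    exact congrArg some (ConnectedComponent.connectedComponentMk_eq_of_adj hxy)
  { toFun := ConnectedComponent.lift f fun _ _ p _ => p.apply_eq_of_forall_adj hf
    invFun := fun o => o.elim ((K.induce _).connectedComponentMk ⟨a, Set.mem_insert a S⟩)
      fun c => c.map (K.induceHomOfLE (Set.subset_insert a S)).toHom
    left_inv := by
      refine ConnectedComponent.ind fun ⟨x, hxa⟩ => ?_
      by_cases hx : x ∈ S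
      · simp only [ConnectedComponent.lift_mk, dif_pos hx, induceHomOfLE_toHom,
          Option.elim_some, ConnectedComponent.map_mk, ConnectedComponent.eq, f]
        rfl
      · simp only [ConnectedComponent.lift_mk, dif_neg hx, induceHomOfLE_toHom,
          Option.elim_none, ConnectedComponent.eq, f]
        obtain rfl := hxa.resolve_right hx
        rfl
    right_inv := by
      rintro (_ | c)
      · simp [f, dif_neg ha]
      · refine c.ind fun x => ?_
        simp only [induceHomOfLE_toHom, Option.elim_some, ConnectedComponent.map_mk,
          ConnectedComponent.lift_mk, Option.dite_none_right_eq_some, Option.some.injEq,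
          ConnectedComponent.eq, f]
        exact ⟨x.2, .rfl⟩ }

lemma SimpleGraph.card_connectedComponent_induce_insert {W : Type*} [Finite W] {K : SimpleGraph W}
    {S : Set W} {a : W} (ha : a ∉ S) (hiso : ∀ x, ¬ K.Adj a x) :
    Nat.card (K.induce (insert a S)).ConnectedComponent
      = Nat.card (K.induce S).ConnectedComponent + 1 := by
  rw [Nat.card_congr (K.induceInsertConnectedComponentEquiv ha hiso), Finite.card_option]

section DeleteA

variable {G : SimpleGraph V} {a : V}

lemma Dset_delV_of_mem_Aset (ha : a ∈ Aset G) : Dset (delV G a) = insert a (Dset G) := by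
  ext v
  refine ⟨fun hv => ?_, fun hv => ?_⟩
  · by_cases hva : v = a
    exacts [Or.inl hva, Or.inr (mem_Dset_of_mem_Dset_delV ha hv hva)]
  · rcases hv with rfl | hv
    · show gnu (delV (delV G v) v) = gnu (delV G v)
      rw [delV_delV_self]
    · have h1 := gnu_delV_le (G := delV G a) v
      have h2 := gnu_le_gnu_delV_add_one (G := delV G v) a
      have h3 := gnu_delV_add_one_of_notMem_Dset ha.1
      have h4 : gnu (delV G v) = gnu G := hv
      rw [delV_comm] at h2
      show gnu (delV (delV G a) v) = gnu (delV G a)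
      omega

lemma Aset_delV_of_mem_Aset (ha : a ∈ Aset G) : Aset (delV G a) = Aset G \ {a} := by
  ext w
  simp only [Aset, Dset_delV_of_mem_Aset ha, Set.mem_sdiff, Set.mem_insert_iff,
    Set.mem_singleton_iff, delV_adj, not_or]
  constructor
  · rintro ⟨⟨hwa, hwD⟩, d, hd, hwd, -, hda⟩
    exact ⟨⟨hwD, d, hd.resolve_left hda, hwd⟩, hwa⟩
  · rintro ⟨⟨hwD, d, hd, hwd⟩, hwa⟩
    exact ⟨⟨hwa, hwD⟩, d, Or.inr hd, hwd, hwa, fun h => ha.1 (h ▸ hd)⟩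

lemma card_connectedComponent_Dset_delV (ha : a ∈ Aset G) :
    Nat.card ((delV G a).induce (Dset (delV G a))).ConnectedComponent
      = Nat.card (G.induce (Dset G)).ConnectedComponent + 1 := by
  rw [Dset_delV_of_mem_Aset ha, SimpleGraph.card_connectedComponent_induce_insert ha.1
    fun _ h => (delV_adj.1 h).2.1 rfl, induce_delV_of_notMem ha.1]

end DeleteA

/-- Gallai–Edmonds: the number `r` of connected components of `G[D]` satisfies
`r = |A| + |V| - 2ν(G)`, stated additively as `r + 2ν(G) = |A| + |V|`. -/
theorem GE_component_count {V : Type} [Fintype V] [DecidableEq V] (G : SimpleGraph V) :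
    Nat.card ((G.induce (Dset G)).ConnectedComponent) + 2 * gnu G
      = (Aset G).ncard + Fintype.card V := by
  induction hn : (Aset G).ncard generalizing G with
  | zero =>
    rw [card_connectedComponent_Dset_of_Aset_eq_empty ((Set.ncard_eq_zero).1 hn), zero_add]
  | succ n ih =>
    obtain ⟨a, ha⟩ := Set.nonempty_of_ncard_ne_zero (s := Aset G) (by omega)
    have hA : (Aset (delV G a)).ncard = n := by
      rw [Aset_delV_of_mem_Aset ha, Set.ncard_sdiff_singleton_of_mem ha, hn, Nat.add_sub_cancel]
    have := ih (delV G a) hA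
    rw [card_connectedComponent_Dset_delV ha] at this
    have := gnu_delV_add_one_of_notMem_Dset ha.1
    omega
end

section
/- Let K be a simplicial complex such that for every non-empty face σ ∈ K, the link lk_K(σ) has vanishing reduced homology in all dimensions ≥ d₀. Then K itself has vanishing reduced homology in all dimensions ≥ d₀ + 1. -/
attribute [local instance] Classical.propDecidable

variable {W : Type} [LinearOrder W] (F : Type) [Field F]

/-- The simplicial boundary operator on formal `F`-linear combinations of finite sets
(faces `s` of cardinality `n` being generators in degree `n`; the empty face is the
generator of the augmentation degree, so this computes *reduced* homology). -/
noncomputable def bdry (x : Finset W →₀ F) : Finset W →₀ F :=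
  x.sum fun s a =>
    ∑ v ∈ s, (a * (-1 : F) ^ (s.filter fun w => w < v).card) • Finsupp.single (s.erase v) (1 : F)

/-- `K` is an (abstract, finite) simplicial complex: a hereditary family of finite sets. -/
def IsComplex (K : Finset (Finset W)) : Prop := ∀ s ∈ K, ∀ t ⊆ s, t ∈ K

/-- The reduced homology (with coefficients in `F`) of the complex `K` vanishes in
dimension `d`: every reduced `d`-cycle of `K` is a boundary of a `(d+1)`-chain of `K`.
(A face of dimension `d` has cardinality `d + 1`.) -/
def VanishesAt (K : Finset (Finset W)) (d : ℕ) : Prop :=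
  ∀ x : Finset W →₀ F, (∀ s ∈ x.support, s ∈ K ∧ s.card = d + 1) → bdry F x = 0 →
    ∃ y : Finset W →₀ F, (∀ s ∈ y.support, s ∈ K ∧ s.card = d + 2) ∧ bdry F y = x

/-- The link of a face `σ` in the complex `K`. -/
noncomputable def linkOf (K : Finset (Finset W)) (σ : Finset W) : Finset (Finset W) :=
  K.filter fun τ => Disjoint τ σ ∧ τ ∪ σ ∈ K

/-!
Induction on the number of faces. Let `v` be the least vertex of `K`. Every chain of `K` splits
as `β + v * α`, with `β` in the deletion `K ∖ v` and `α` in `lk {v}`, and since `v` precedes all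
other vertices, `∂(v * α) = α - v * ∂α`. So a cycle `β + v * α` of `K` gives a cycle `α` of
`lk {v}`, filled by some `γ` one degree lower, and a cycle `β + γ` of `K ∖ v`, filled by the
induction hypothesis; together these fill the original cycle.

The hypothesis passes to `K ∖ v`: its links are the deletions `lk_K σ ∖ v`, and in `lk_K σ` the
link of `v` is `lk_K (σ ∪ {v})`. The same splitting shows that deleting `v` from a complex whose
homology and whose link of `v` vanish in degree `d` leaves degree `d` vanishing.
-/

section Complexes

variable {V : Type} {K : Finset (Finset V)} {v : V} {σ τ : Finset V}

noncomputable def deletion (K : Finset (Finset V)) (v : V) : Finset (Finset V) :=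
  K.filter fun s => v ∉ s

lemma mem_deletion : τ ∈ deletion K v ↔ τ ∈ K ∧ v ∉ τ :=
  Finset.mem_filter

lemma deletion_subset : deletion K v ⊆ K :=
  Finset.filter_subset _ K

lemma deletion_ssubset (hv : {v} ∈ K) : deletion K v ⊂ K :=
  Finset.filter_ssubset.2 ⟨{v}, hv, not_not.2 (Finset.mem_singleton_self v)⟩

lemma mem_linkOf : τ ∈ linkOf K σ ↔ τ ∈ K ∧ Disjoint τ σ ∧ τ ∪ σ ∈ K :=
  Finset.mem_filter

lemma mem_linkOf_singleton : τ ∈ linkOf K {v} ↔ τ ∈ K ∧ v ∉ τ ∧ insert v τ ∈ K := by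
  rw [mem_linkOf, Finset.disjoint_singleton_right, Finset.union_comm, ← Finset.insert_eq]

lemma linkOf_singleton_subset_deletion : linkOf K {v} ⊆ deletion K v := fun _ hτ =>
  mem_deletion.2 ⟨(mem_linkOf_singleton.1 hτ).1, (mem_linkOf_singleton.1 hτ).2.1⟩

lemma IsComplex.deletion (hK : IsComplex K) (v : V) : IsComplex (deletion K v) :=
  fun s hs t hts =>
    mem_deletion.2 ⟨hK s (mem_deletion.1 hs).1 t hts, fun hv => (mem_deletion.1 hs).2 (hts hv)⟩

lemma IsComplex.linkOf (hK : IsComplex K) (σ : Finset V) : IsComplex (linkOf K σ) :=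
  fun s hs t hts => by
    obtain ⟨hsK, hdisj, hsσ⟩ := mem_linkOf.1 hs
    exact mem_linkOf.2 ⟨hK s hsK t hts, hdisj.mono_left hts,
      hK _ hsσ _ (Finset.union_subset_union_left hts)⟩

lemma linkOf_eq_empty_of_notMem (hK : IsComplex K) (hσ : σ ∉ K) : linkOf K σ = ∅ :=
  Finset.eq_empty_of_forall_notMem fun _ hτ =>
    hσ (hK _ (mem_linkOf.1 hτ).2.2 _ Finset.subset_union_right)

lemma linkOf_deletion (hσ : v ∉ σ) : linkOf (deletion K v) σ = deletion (linkOf K σ) v := by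
  ext τ
  simp only [mem_linkOf, mem_deletion, Finset.mem_union, hσ, or_false]
  tauto

lemma linkOf_linkOf_singleton (hK : IsComplex K) (hσ : v ∉ σ) :
    linkOf (linkOf K σ) {v} = linkOf K (insert v σ) := by
  ext τ
  rw [mem_linkOf_singleton]
  simp only [mem_linkOf, Finset.disjoint_insert_left, Finset.disjoint_insert_right,
    Finset.insert_union, Finset.union_insert]
  constructor
  · rintro ⟨⟨hτ, hdisj, -⟩, hvτ, -, -, h⟩
    exact ⟨hτ, ⟨hvτ, hdisj⟩, h⟩
  · rintro ⟨hτ, ⟨hvτ, hdisj⟩, h⟩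
    exact ⟨⟨hτ, hdisj, hK _ h _ (Finset.subset_insert v _)⟩, hvτ,
      hK _ h _ (Finset.insert_subset_insert v Finset.subset_union_left), ⟨hσ, hdisj⟩, h⟩

end Complexes

section Cones

variable {V : Type} {F} {K L : Finset (Finset V)} {v : V} {n : ℕ}

/-- `n` is the cardinality of the faces, one more than their dimension. -/
def chains (K : Finset (Finset V)) (n : ℕ) : Submodule F (Finset V →₀ F) :=
  Finsupp.supported F F {s | s ∈ K ∧ s.card = n}

lemma chains_mono (h : K ⊆ L) : chains (F := F) K n ≤ chains L n :=
  Finsupp.supported_mono fun _ hs => ⟨h hs.1, hs.2⟩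

lemma chains_deletion_le : chains (F := F) (deletion K v) n ≤ Finsupp.supported F F {s | v ∉ s} :=
  Finsupp.supported_mono fun _ hs => (mem_deletion.1 hs.1).2

variable (F) in
noncomputable def cone (v : V) : (Finset V →₀ F) →ₗ[F] (Finset V →₀ F) :=
  Finsupp.lmapDomain F F (insert v)

lemma cone_single (v : V) (t : Finset V) (a : F) :
    cone F v (Finsupp.single t a) = Finsupp.single (insert v t) a :=
  Finsupp.mapDomain_single

lemma cone_apply_insert {α : Finset V →₀ F} (hα : α ∈ Finsupp.supported F F {s | v ∉ s})
    {s : Finset V} (hs : v ∉ s) : cone F v α (insert v s) = α s :=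
  Finsupp.mapDomain_apply' _ _ hα
    (fun a ha b hb hab => by rw [← Finset.erase_insert ha, hab, Finset.erase_insert hb]) hs

lemma cone_mem_chains {γ : Finset V →₀ F} (hγ : γ ∈ chains (linkOf K {v}) n) :
    cone F v γ ∈ chains K (n + 1) := by
  intro s hs
  obtain ⟨τ, hτ, rfl⟩ := Finset.mem_image.1 (Finsupp.mapDomain_support hs)
  obtain ⟨-, hvτ, hins⟩ := mem_linkOf_singleton.1 (hγ hτ).1
  exact ⟨hins, by rw [Finset.card_insert_of_notMem hvτ, (hγ hτ).2]⟩

lemma exists_eq_add_cone (hK : IsComplex K) (v : V) {x : Finset V →₀ F}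
    (hx : x ∈ chains K (n + 1)) :
    ∃ β ∈ chains (deletion K v) (n + 1), ∃ α ∈ chains (linkOf K {v}) n, x = β + cone F v α := by
  refine ⟨x.filter (v ∉ ·), fun s hs => ?_,
    Finsupp.mapDomain (Finset.erase · v) (x.filter fun s => ¬v ∉ s), fun r hr => ?_, ?_⟩
  · rw [Finset.mem_coe, Finsupp.support_filter, Finset.mem_filter] at hs
    exact ⟨mem_deletion.2 ⟨(hx hs.1).1, hs.2⟩, (hx hs.1).2⟩
  · obtain ⟨s, hs, rfl⟩ := Finset.mem_image.1 (Finsupp.mapDomain_support hr)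
    rw [Finsupp.support_filter, Finset.mem_filter, not_not] at hs
    obtain ⟨hs, hvs⟩ := hs
    refine ⟨mem_linkOf_singleton.2 ⟨hK s (hx hs).1 _ (Finset.erase_subset v s),
      Finset.notMem_erase v s, by rw [Finset.insert_erase hvs]; exact (hx hs).1⟩, ?_⟩
    rw [Finset.card_erase_of_mem hvs, (hx hs).2, Nat.add_sub_cancel]
  · conv_lhs => rw [← Finsupp.filter_add_filter_not x (v ∉ ·)]
    congr 1
    rw [cone, Finsupp.lmapDomain_apply, ← Finsupp.mapDomain_comp]
    refine ((Finsupp.mapDomain_congr fun s hs => ?_).trans Finsupp.mapDomain_id).symm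
    rw [Finsupp.support_filter, Finset.mem_filter, not_not] at hs
    exact Finset.insert_erase hs.2

lemma eq_zero_of_add_cone_eq_zero {β α : Finset V →₀ F}
    (hβ : β ∈ Finsupp.supported F F {s | v ∉ s}) (hα : α ∈ Finsupp.supported F F {s | v ∉ s})
    (h : β + cone F v α = 0) : β = 0 ∧ α = 0 := by
  have hα0 : α = 0 := by
    ext s
    by_cases hvs : v ∈ s
    · exact (Finsupp.mem_supported' F α).1 hα s (not_not.2 hvs)
    · have := DFunLike.congr_fun h (insert v s)
      rwa [Finsupp.add_apply, cone_apply_insert hα hvs,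
        (Finsupp.mem_supported' F β).1 hβ _ (not_not.2 (Finset.mem_insert_self v s)),
        zero_add] at this
  exact ⟨by simpa [hα0] using h, hα0⟩

end Cones

section Boundary

variable {F} {K : Finset (Finset W)} {v : W}

variable (F) in
lemma bdry_single (s : Finset W) (a : F) :
    bdry F (Finsupp.single s a) =
      ∑ u ∈ s, Finsupp.single (s.erase u) (a * (-1) ^ (s.filter fun w => w < u).card) := by
  simp [bdry]

variable (F) in
noncomputable def boundaryMap : (Finset W →₀ F) →ₗ[F] (Finset W →₀ F) :=
  Finsupp.linearCombination F fun s => bdry F (Finsupp.single s 1)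

lemma boundaryMap_apply (x : Finset W →₀ F) : boundaryMap F x = bdry F x := by
  simp only [boundaryMap, Finsupp.linearCombination_apply, bdry_single, Finset.smul_sum,
    Finsupp.smul_single, smul_eq_mul, one_mul]
  simp [bdry]

lemma bdry_add (x y : Finset W →₀ F) : bdry F (x + y) = bdry F x + bdry F y := by
  simp only [← boundaryMap_apply, map_add]

lemma bdry_sub (x y : Finset W →₀ F) : bdry F (x - y) = bdry F x - bdry F y := by
  simp only [← boundaryMap_apply, map_sub]

lemma bdry_mem_supported {S : Set (Finset W)} (hS : ∀ s ∈ S, ∀ t ⊆ s, t ∈ S)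
    {x : Finset W →₀ F} (hx : x ∈ Finsupp.supported F F S) :
    bdry F x ∈ Finsupp.supported F F S := by
  intro r hr
  obtain ⟨s, hs, hr⟩ := Finset.mem_biUnion.1 (Finsupp.support_sum hr)
  obtain ⟨u, -, hr⟩ := Finsupp.mem_support_finsetSum r hr
  rw [Finset.mem_singleton.1 (Finsupp.support_single_subset (Finsupp.support_smul hr))]
  exact hS s (hx hs) _ (Finset.erase_subset u s)

lemma bdry_cone_single {t : Finset W} (ht : ∀ w ∈ t, v < w) :
    bdry F (cone F v (Finsupp.single t 1)) =
      Finsupp.single t 1 - cone F v (bdry F (Finsupp.single t 1)) := by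
  have hv : v ∉ t := fun h => lt_irrefl v (ht v h)
  have hv_min : ((insert v t).filter fun w => w < v) = ∅ :=
    Finset.filter_eq_empty_iff.2 fun w hw => not_lt.2 <| by
      rcases Finset.mem_insert.1 hw with rfl | hw
      exacts [le_rfl, (ht w hw).le]
  rw [cone_single, bdry_single, bdry_single, Finset.sum_insert hv, hv_min, Finset.erase_insert hv,
    map_sum, sub_eq_add_neg, ← Finset.sum_neg_distrib]
  simp only [Finset.card_empty, pow_zero, mul_one]
  congr 1
  refine Finset.sum_congr rfl fun u hu => ?_
  -- `v` is one more predecessor of `u`, so every term changes sign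
  have hfilter : ((insert v t).filter fun w => w < u) = insert v (t.filter fun w => w < u) := by
    rw [Finset.filter_insert, if_pos (ht u hu)]
  rw [hfilter, Finset.card_insert_of_notMem fun h => hv (Finset.mem_of_mem_filter v h),
    Finset.erase_insert_of_ne (ht u hu).ne, cone_single, ← Finsupp.single_neg, pow_succ]
  ring_nf

lemma bdry_cone {γ : Finset W →₀ F} (hγ : γ ∈ Finsupp.supported F F {s | ∀ w ∈ s, v < w}) :
    bdry F (cone F v γ) = γ - cone F v (bdry F γ) := by
  have key : ∀ x ∈ Finsupp.supported F F {s : Finset W | ∀ w ∈ s, v < w},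
      (boundaryMap F ∘ₗ cone F v) x =
        (LinearMap.id - cone F v ∘ₗ boundaryMap F : (Finset W →₀ F) →ₗ[F] _) x := by
    rw [Finsupp.supported_eq_span_single]
    refine fun x hx => LinearMap.eqOn_span ?_ hx
    rintro _ ⟨t, ht, rfl⟩
    simpa [boundaryMap_apply] using bdry_cone_single ht
  simpa [boundaryMap_apply] using key γ hγ

lemma bdry_add_cone_eq {β α c : Finset W →₀ F} (hβ : β ∈ Finsupp.supported F F {s | v ∉ s})
    (hα : α ∈ Finsupp.supported F F {s | ∀ w ∈ s, v < w})
    (hc : c ∈ Finsupp.supported F F {s | v ∉ s}) (h : bdry F (β + cone F v α) = c) :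
    bdry F α = 0 ∧ bdry F β + α = c := by
  have hdown : ∀ s ∈ {s : Finset W | v ∉ s}, ∀ t ⊆ s, t ∈ {s : Finset W | v ∉ s} :=
    fun _ hs _ hts hvt => hs (hts hvt)
  have hα' : α ∈ Finsupp.supported F F {s | v ∉ s} :=
    Finsupp.supported_mono (fun s (hs : ∀ w ∈ s, v < w) hvs => lt_irrefl v (hs v hvs)) hα
  rw [bdry_add, bdry_cone hα] at h
  obtain ⟨h₁, h₂⟩ := eq_zero_of_add_cone_eq_zero
    (sub_mem (add_mem (bdry_mem_supported hdown hβ) hα') hc)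
    (neg_mem (bdry_mem_supported hdown hα')) (by rw [map_neg, ← h]; abel)
  exact ⟨neg_eq_zero.1 h₂, sub_eq_zero.1 h₁⟩

lemma chains_linkOf_le (hv : ∀ s ∈ K, ∀ w ∈ s, v ≤ w) {n : ℕ} :
    chains (F := F) (linkOf K {v}) n ≤ Finsupp.supported F F {s | ∀ w ∈ s, v < w} :=
  Finsupp.supported_mono fun s hs w hw => by
    obtain ⟨hsK, hvs, -⟩ := mem_linkOf_singleton.1 hs.1
    exact (hv s hsK w hw).lt_of_ne fun h => hvs (h ▸ hw)

end Boundary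

section Vanishing

variable {F} {K : Finset (Finset W)} {v : W} {d : ℕ}

lemma vanishesAt_iff : VanishesAt F K d ↔
    ∀ x ∈ chains K (d + 1), bdry F x = 0 → ∃ y ∈ chains K (d + 2), bdry F y = x :=
  Iff.rfl

lemma vanishesAt_of_forall_card_ne (hK : ∀ s ∈ K, s.card ≠ d + 1) : VanishesAt F K d := by
  refine vanishesAt_iff.2 fun x hx _ => ⟨0, zero_mem _, ?_⟩
  have hx0 : x = 0 := Finsupp.support_eq_empty.1 <|
    Finset.eq_empty_of_forall_notMem fun s hs => hK s (hx hs).1 (hx hs).2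
  rw [hx0, ← boundaryMap_apply, map_zero]

lemma vanishesAt_deletion (hK : IsComplex K) (hv : ∀ s ∈ K, ∀ w ∈ s, v ≤ w)
    (hvan : VanishesAt F K d) (hlink : VanishesAt F (linkOf K {v}) d) :
    VanishesAt F (deletion K v) d := by
  refine vanishesAt_iff.2 fun x hx hbx => ?_
  obtain ⟨y, hy, hby⟩ := hvan x (chains_mono deletion_subset hx) hbx
  obtain ⟨β, hβ, α, hα, rfl⟩ := exists_eq_add_cone hK v hy
  obtain ⟨hbα, hbβ⟩ :=
    bdry_add_cone_eq (chains_deletion_le hβ) (chains_linkOf_le hv hα) (chains_deletion_le hx) hby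
  obtain ⟨γ, hγ, hbγ⟩ := hlink α hα hbα
  exact ⟨β + γ, add_mem hβ (chains_mono linkOf_singleton_subset_deletion hγ),
    by rw [bdry_add, hbγ, hbβ]⟩

lemma vanishesAt_of_deletion (hK : IsComplex K) (hv : ∀ s ∈ K, ∀ w ∈ s, v ≤ w)
    (hdel : VanishesAt F (deletion K v) (d + 1)) (hlink : VanishesAt F (linkOf K {v}) d) :
    VanishesAt F K (d + 1) := by
  refine vanishesAt_iff.2 fun x hx hbx => ?_
  obtain ⟨β, hβ, α, hα, rfl⟩ := exists_eq_add_cone hK v hx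
  obtain ⟨hbα, hbβ⟩ :=
    bdry_add_cone_eq (chains_deletion_le hβ) (chains_linkOf_le hv hα) (zero_mem _) hbx
  obtain ⟨γ, hγ, hbγ⟩ := hlink α hα hbα
  obtain ⟨y, hy, hby⟩ :=
    hdel (β + γ) (add_mem hβ (chains_mono linkOf_singleton_subset_deletion hγ))
      (by rw [bdry_add, hbγ, hbβ])
  refine ⟨y - cone F v γ, sub_mem (chains_mono deletion_subset hy) (cone_mem_chains hγ), ?_⟩
  rw [bdry_sub, hby, bdry_cone (chains_linkOf_le hv hγ), hbγ]
  abel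

lemma vanishesAt_linkOf_of_ne_empty (hK : IsComplex K) {d₀ : ℕ}
    (h : ∀ σ ∈ K, σ ≠ ∅ → ∀ d, d₀ ≤ d → VanishesAt F (linkOf K σ) d)
    {σ : Finset W} (hσ : σ ≠ ∅) (hd : d₀ ≤ d) : VanishesAt F (linkOf K σ) d := by
  by_cases hσK : σ ∈ K
  · exact h σ hσK hσ d hd
  · rw [linkOf_eq_empty_of_notMem hK hσK]
    exact vanishesAt_of_forall_card_ne fun s hs => absurd hs (Finset.notMem_empty s)

lemma vanishesAt_linkOf_deletion (hK : IsComplex K) (hv : ∀ s ∈ K, ∀ w ∈ s, v ≤ w) {d₀ : ℕ}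
    (h : ∀ σ ∈ K, σ ≠ ∅ → ∀ d, d₀ ≤ d → VanishesAt F (linkOf K σ) d) :
    ∀ σ ∈ deletion K v, σ ≠ ∅ → ∀ d, d₀ ≤ d → VanishesAt F (linkOf (deletion K v) σ) d := by
  intro σ hσ hσne d hd
  obtain ⟨hσK, hvσ⟩ := mem_deletion.1 hσ
  rw [linkOf_deletion hvσ]
  refine vanishesAt_deletion (hK.linkOf σ) (fun s hs => hv s (mem_linkOf.1 hs).1)
    (h σ hσK hσne d hd) ?_
  rw [linkOf_linkOf_singleton hK hvσ]
  exact vanishesAt_linkOf_of_ne_empty hK h (by simp) hd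

lemma IsComplex.exists_min_vertex (hK : IsComplex K) (hne : ∃ s ∈ K, s.Nonempty) :
    ∃ v, {v} ∈ K ∧ ∀ s ∈ K, ∀ w ∈ s, v ≤ w := by
  have hV : (K.biUnion id).Nonempty := by
    obtain ⟨s, hs, w, hw⟩ := hne
    exact ⟨w, Finset.mem_biUnion.2 ⟨s, hs, hw⟩⟩
  obtain ⟨s, hs, hvs⟩ := Finset.mem_biUnion.1 ((K.biUnion id).min'_mem hV)
  exact ⟨_, hK s hs _ (Finset.singleton_subset_iff.2 hvs),
    fun s hs w hw => (K.biUnion id).min'_le w (Finset.mem_biUnion.2 ⟨s, hs, hw⟩)⟩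

end Vanishing

/-- If every link of a non-empty face of `K` has vanishing reduced homology in all
dimensions `≥ d₀`, then `K` itself has vanishing reduced homology in all
dimensions `≥ d₀ + 1`. -/
theorem vanishing_of_link_vanishing {W : Type} [LinearOrder W] (F : Type) [Field F]
    (K : Finset (Finset W)) (hK : IsComplex K) (d₀ : ℕ)
    (h : ∀ σ ∈ K, σ ≠ ∅ → ∀ d, d₀ ≤ d → VanishesAt F (linkOf K σ) d) :
    ∀ d, d₀ + 1 ≤ d → VanishesAt F K d := by
  induction K using Finset.strongInduction with
  | H K ih =>
    intro d hd
    by_cases hvert : ∃ s ∈ K, s.Nonempty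
    · obtain ⟨v, hvK, hv⟩ := hK.exists_min_vertex hvert
      obtain ⟨d, rfl⟩ : ∃ d', d = d' + 1 := ⟨d - 1, by omega⟩
      exact vanishesAt_of_deletion hK hv
        (ih _ (deletion_ssubset hvK) (hK.deletion v) (vanishesAt_linkOf_deletion hK hv h) _ hd)
        (h {v} hvK (Finset.singleton_ne_empty v) d (by omega))
    · refine vanishesAt_of_forall_card_ne fun s hs hcard => hvert ⟨s, hs, ?_⟩
      exact Finset.card_pos.1 (by omega)
end
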